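/- In a Tait-style/sequent formulation of Herbrand's theorem derived from expansion trees: a purely existential prenex formula ∃x₁...∃xₖ. A (A quantifier-free) is valid iff there exist finitely many substitution tuples (t₁ⁱ, ..., tₖⁱ), i = 1..n, such that the disjunction ⋁ᵢ A[x₁/t₁ⁱ, ..., xₖ/tₖⁱ] is a propositional tautology. -/

import Mathlib

/-- First-order terms: variables, constants, unary function symbols. -/
inductive Tm where
  | var : ℕ → Tm
  | cst : ℕ → Tm
  | fn  : ℕ → Tm → Tm
deriving DecidableEq

/-- First-order formulas with named bound variables. -/
inductive Fml where
  | atom : ℕ → List Tm → Fml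
  | neg  : Fml → Fml
  | and  : Fml → Fml → Fml
  | or   : Fml → Fml → Fml
  | imp  : Fml → Fml → Fml
  | all  : ℕ → Fml → Fml
  | ex   : ℕ → Fml → Fml
deriving DecidableEq

/-- Substitution of a single variable in a term. -/
def Tm.subst (x : ℕ) (t : Tm) : Tm → Tm
  | .var y => if y = x then t else .var y
  | .cst c => .cst c
  | .fn f u => .fn f (Tm.subst x t u)

/-- Simultaneous substitution in a term. -/
def Tm.substAll (σ : ℕ → Tm) : Tm → Tm
  | .var y => σ y
  | .cst c => .cst c
  | .fn f u => .fn f (u.substAll σ)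

/-- Free variables of a term. -/
def Tm.fv : Tm → Set ℕ
  | .var y => {y}
  | .cst _ => ∅
  | .fn _ u => u.fv

/-- Substitution of a single variable in a formula (naive; bound variables are
assumed pairwise distinct and distinct from substituted variables). -/
def Fml.subst (x : ℕ) (t : Tm) : Fml → Fml
  | .atom n ts => .atom n (ts.map (Tm.subst x t))
  | .neg A => .neg (A.subst x t)
  | .and A B => .and (A.subst x t) (B.subst x t)
  | .or A B => .or (A.subst x t) (B.subst x t)
  | .imp A B => .imp (A.subst x t) (B.subst x t)
  | .all y A => if y = x then .all y A else .all y (A.subst x t)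
  | .ex y A => if y = x then .ex y A else .ex y (A.subst x t)

/-- Simultaneous substitution in a formula. -/
def Fml.substAll (σ : ℕ → Tm) : Fml → Fml
  | .atom n ts => .atom n (ts.map (Tm.substAll σ))
  | .neg A => .neg (A.substAll σ)
  | .and A B => .and (A.substAll σ) (B.substAll σ)
  | .or A B => .or (A.substAll σ) (B.substAll σ)
  | .imp A B => .imp (A.substAll σ) (B.substAll σ)
  | .all y A => .all y (A.substAll (Function.update σ y (.var y)))
  | .ex y A => .ex y (A.substAll (Function.update σ y (.var y)))

/-- A formula is quantifier-free. -/
def Fml.qf : Fml → Prop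
  | .atom _ _ => True
  | .neg A => A.qf
  | .and A B => A.qf ∧ B.qf
  | .or A B => A.qf ∧ B.qf
  | .imp A B => A.qf ∧ B.qf
  | .all _ _ => False
  | .ex _ _ => False

/-- First-order structures (with at least one element; every constant symbol is
interpreted, so the language has at least one constant). -/
structure Str where
  Dom : Type
  inh : Dom
  cI : ℕ → Dom
  fI : ℕ → Dom → Dom
  pI : ℕ → List Dom → Prop

/-- Evaluation of terms. -/
def Tm.eval (S : Str) (v : ℕ → S.Dom) : Tm → S.Dom
  | .var y => v y
  | .cst c => S.cI c
  | .fn f u => S.fI f (u.eval S v)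

/-- Tarskian satisfaction. -/
def Fml.Sat (S : Str) (v : ℕ → S.Dom) : Fml → Prop
  | .atom n ts => S.pI n (ts.map (Tm.eval S v))
  | .neg A => ¬ A.Sat S v
  | .and A B => A.Sat S v ∧ B.Sat S v
  | .or A B => A.Sat S v ∨ B.Sat S v
  | .imp A B => A.Sat S v → B.Sat S v
  | .all y A => ∀ d : S.Dom, A.Sat S (Function.update v y d)
  | .ex y A => ∃ d : S.Dom, A.Sat S (Function.update v y d)

/-- Validity of a formula. -/
def Fml.Valid (F : Fml) : Prop := ∀ (S : Str) (v : ℕ → S.Dom), F.Sat S v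

/-- Validity of a sequent `Γ ⊢ Δ`: in every structure, if all formulas of `Γ`
hold then some formula of `Δ` holds.  For quantifier-free sequents this is the
notion of being a (propositional) tautology. -/
def ValidSeq (Γ Δ : List Fml) : Prop :=
  ∀ (S : Str) (v : ℕ → S.Dom), (∀ F ∈ Γ, F.Sat S v) → ∃ G ∈ Δ, G.Sat S v

/-- Polarities: `false` is negative (0), `true` is positive (1). -/
abbrev Pol := Bool

/-- The subformula occurring at a given position. -/
inductive SubAt : Fml → List ℕ → Fml → Prop where
  | here (F : Fml) : SubAt F [] F
  | neg  : SubAt A pos F' → SubAt (.neg A) (0 :: pos) F'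
  | andL : SubAt A pos F' → SubAt (.and A B) (0 :: pos) F'
  | andR : SubAt B pos F' → SubAt (.and A B) (1 :: pos) F'
  | orL  : SubAt A pos F' → SubAt (.or A B) (0 :: pos) F'
  | orR  : SubAt B pos F' → SubAt (.or A B) (1 :: pos) F'
  | impL : SubAt A pos F' → SubAt (.imp A B) (0 :: pos) F'
  | impR : SubAt B pos F' → SubAt (.imp A B) (1 :: pos) F'
  | all  : SubAt A pos F' → SubAt (.all x A) (0 :: pos) F'
  | ex   : SubAt A pos F' → SubAt (.ex x A) (0 :: pos) F'

/-- `PolRel F q pos p`: if `F` itself is assigned polarity `q`, then the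
subformula occurrence at position `pos` has polarity `p`, according to the
recursive polarity rules (∧, ∨, ∀, ∃ preserve polarity; ¬ and the antecedent
of → flip it). -/
inductive PolRel : Fml → Pol → List ℕ → Pol → Prop where
  | here (F : Fml) (q : Pol) : PolRel F q [] q
  | neg  : PolRel A (!q) pos p → PolRel (.neg A) q (0 :: pos) p
  | andL : PolRel A q pos p → PolRel (.and A B) q (0 :: pos) p
  | andR : PolRel B q pos p → PolRel (.and A B) q (1 :: pos) p
  | orL  : PolRel A q pos p → PolRel (.or A B) q (0 :: pos) p
  | orR  : PolRel B q pos p → PolRel (.or A B) q (1 :: pos) p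
  | impL : PolRel A (!q) pos p → PolRel (.imp A B) q (0 :: pos) p
  | impR : PolRel B q pos p → PolRel (.imp A B) q (1 :: pos) p
  | all  : PolRel A q pos p → PolRel (.all x A) q (0 :: pos) p
  | ex   : PolRel A q pos p → PolRel (.ex x A) q (0 :: pos) p

mutual
/-- Expansion trees.  `weak x A chs` is a weak quantifier node
`Λx.A +^{t₁} E₁ ⋯ +^{tₙ} Eₙ`; `strong x A α E` is a strong quantifier node
`Πx.A +^α E` with eigenvariable `α`. -/
inductive ET where
  | atom : ℕ → List Tm → ET
  | neg : ET → ET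
  | and : ET → ET → ET
  | or : ET → ET → ET
  | imp : ET → ET → ET
  | weak : ℕ → Fml → ETs → ET
  | strong : ℕ → Fml → ℕ → ET → ET
/-- Lists of children of a weak quantifier node, with their edge labels. -/
inductive ETs where
  | nil : ETs
  | cons : Tm → ET → ETs → ETs
end

/-- The shallow formula `Sh(E, p)` of an expansion tree. -/
def ET.sh : ET → Pol → Fml
  | .atom n ts, _ => .atom n ts
  | .neg E, p => .neg (E.sh (!p))
  | .and E1 E2, p => .and (E1.sh p) (E2.sh p)
  | .or E1 E2, p => .or (E1.sh p) (E2.sh p)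
  | .imp E1 E2, p => .imp (E1.sh (!p)) (E2.sh p)
  | .weak x A _, false => .all x A
  | .weak x A _, true => .ex x A
  | .strong x A _ _, false => .ex x A
  | .strong x A _ _, true => .all x A

/-- The empty conjunction. -/
def fTop : Fml := .imp (.atom 0 []) (.atom 0 [])
/-- The empty disjunction. -/
def fBot : Fml := .neg fTop

mutual
/-- The deep (quantifier-free) formula `Dp(E, p)` of an expansion tree. -/
def ET.dp : ET → Pol → Fml
  | .atom n ts, _ => .atom n ts
  | .neg E, p => .neg (E.dp (!p))
  | .and E1 E2, p => .and (E1.dp p) (E2.dp p)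
  | .or E1 E2, p => .or (E1.dp p) (E2.dp p)
  | .imp E1 E2, p => .imp (E1.dp (!p)) (E2.dp p)
  | .weak _ _ chs, p => ETs.dps chs p
  | .strong _ _ _ E, p => E.dp p
/-- Conjunction (polarity 0) or disjunction (polarity 1) of the deep formulas
of the children of a weak node. -/
def ETs.dps : ETs → Pol → Fml
  | .nil, false => fTop
  | .nil, true => fBot
  | .cons _ E .nil, p => E.dp p
  | .cons _ E (.cons t E' rest), false => .and (E.dp false) (ETs.dps (.cons t E' rest) false)
  | .cons _ E (.cons t E' rest), true => .or (E.dp true) (ETs.dps (.cons t E' rest) true)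
end

mutual
/-- Well-formedness of an expansion tree at a given polarity: the shallow
formula of the child under edge label `t` of a quantifier node `Q x. A` must
be `A[x/t]` (resp. `A[x/α]` for the eigenvariable `α` of a strong node). -/
def ET.WF : ET → Pol → Prop
  | .atom _ _, _ => True
  | .neg E, p => E.WF (!p)
  | .and E1 E2, p => E1.WF p ∧ E2.WF p
  | .or E1 E2, p => E1.WF p ∧ E2.WF p
  | .imp E1 E2, p => E1.WF (!p) ∧ E2.WF p
  | .weak x A chs, p => ETs.WFs x A chs p
  | .strong x A a E, p => E.sh p = A.subst x (.var a) ∧ E.WF p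
def ETs.WFs : ℕ → Fml → ETs → Pol → Prop
  | _, _, .nil, _ => True
  | x, A, .cons t E rest, p => E.sh p = A.subst x t ∧ E.WF p ∧ ETs.WFs x A rest p
end

mutual
/-- An expansion tree contains only weak quantifier nodes. -/
def ET.weakOnly : ET → Prop
  | .atom _ _ => True
  | .neg E => E.weakOnly
  | .and E1 E2 => E1.weakOnly ∧ E2.weakOnly
  | .or E1 E2 => E1.weakOnly ∧ E2.weakOnly
  | .imp E1 E2 => E1.weakOnly ∧ E2.weakOnly
  | .weak _ _ chs => ETs.weakOnlys chs
  | .strong _ _ _ _ => False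
def ETs.weakOnlys : ETs → Prop
  | .nil => True
  | .cons _ E rest => E.weakOnly ∧ ETs.weakOnlys rest
end

mutual
/-- The eigenvariables of the strong nodes occurring in an expansion tree. -/
def ET.eig : ET → Set ℕ
  | .atom _ _ => ∅
  | .neg E => E.eig
  | .and E1 E2 => E1.eig ∪ E2.eig
  | .or E1 E2 => E1.eig ∪ E2.eig
  | .imp E1 E2 => E1.eig ∪ E2.eig
  | .weak _ _ chs => ETs.eigs chs
  | .strong _ _ a E => insert a E.eig
def ETs.eigs : ETs → Set ℕ
  | .nil => ∅
  | .cons _ E rest => E.eig ∪ ETs.eigs rest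
end

mutual
/-- The terms occurring (as edge labels) in an expansion tree. -/
def ET.labels : ET → Set Tm
  | .atom _ _ => ∅
  | .neg E => E.labels
  | .and E1 E2 => E1.labels ∪ E2.labels
  | .or E1 E2 => E1.labels ∪ E2.labels
  | .imp E1 E2 => E1.labels ∪ E2.labels
  | .weak _ _ chs => ETs.labelss chs
  | .strong _ _ a E => insert (.var a) E.labels
def ETs.labelss : ETs → Set Tm
  | .nil => ∅
  | .cons t E rest => insert t (E.labels ∪ ETs.labelss rest)
end

mutual
/-- `ET.domi E t a`: inside `E`, the term `t` labels an edge below which there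
is a strong node with eigenvariable `a` (i.e. `t` dominates that node). -/
def ET.domi : ET → Tm → ℕ → Prop
  | .atom _ _, _, _ => False
  | .neg E, t, a => E.domi t a
  | .and E1 E2, t, a => E1.domi t a ∨ E2.domi t a
  | .or E1 E2, t, a => E1.domi t a ∨ E2.domi t a
  | .imp E1 E2, t, a => E1.domi t a ∨ E2.domi t a
  | .weak _ _ chs, t, a => ETs.domis chs t a
  | .strong _ _ b E, t, a => (t = .var b ∧ a ∈ E.eig) ∨ E.domi t a
def ETs.domis : ETs → Tm → ℕ → Prop
  | .nil, _, _ => False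
  | .cons s E rest, t, a => (t = s ∧ a ∈ E.eig) ∨ E.domi t a ∨ ETs.domis rest t a
end

/-- An expansion sequent: antecedent and succedent lists of expansion trees. -/
def IsLabel (ant suc : List ET) (t : Tm) : Prop := ∃ E ∈ ant ++ suc, t ∈ E.labels

/-- The one-step dependency relation `<⁰ε` on term occurrences of the
expansion sequent: `t <⁰ε s` iff some variable free in `s` is the
eigenvariable of a node dominated by `t`. -/
def Dep0 (ant suc : List ET) (t s : Tm) : Prop :=
  IsLabel ant suc t ∧ IsLabel ant suc s ∧
    ∃ a ∈ s.fv, ∃ E ∈ ant ++ suc, E.domi t a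

/-- The dependency relation `<ε`: the transitive closure of `<⁰ε`. -/
def Dep (ant suc : List ET) : Tm → Tm → Prop := Relation.TransGen (Dep0 ant suc)

/-- The deep sequent of an expansion sequent is a tautology. -/
def DeepTaut (ant suc : List ET) : Prop :=
  ValidSeq (ant.map (ET.dp · false)) (suc.map (ET.dp · true))

/-- An expansion sequent is an expansion proof iff its deep sequent is a
tautology and its dependency relation is acyclic. -/
def ExpProof (ant suc : List ET) : Prop :=
  DeepTaut ant suc ∧ ∀ t, ¬ Dep ant suc t t

/-- Translation of a formula into an expansion tree (Definition 8), with
`W x` the list of instance terms for the weak quantifier binding `x`, `Sg x`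
the eigenvariable for the strong quantifier binding `x`, and `ρ` the
substitution accumulated so far. -/
def ETof (W : ℕ → List Tm) (Sg : ℕ → ℕ) : (ℕ → Tm) → Pol → Fml → ET
  | ρ, _, .atom n ts => .atom n (ts.map (Tm.substAll ρ))
  | ρ, p, .neg A => .neg (ETof W Sg ρ (!p) A)
  | ρ, p, .and A B => .and (ETof W Sg ρ p A) (ETof W Sg ρ p B)
  | ρ, p, .or A B => .or (ETof W Sg ρ p A) (ETof W Sg ρ p B)
  | ρ, p, .imp A B => .imp (ETof W Sg ρ (!p) A) (ETof W Sg ρ p B)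
  | ρ, false, .all x A =>
      .weak x (A.substAll (Function.update ρ x (.var x)))
        ((W x).foldr (fun t acc =>
          ETs.cons t (ETof W Sg (Function.update ρ x t) false A) acc) .nil)
  | ρ, true, .all x A =>
      .strong x (A.substAll (Function.update ρ x (.var x))) (Sg x)
        (ETof W Sg (Function.update ρ x (.var (Sg x))) true A)
  | ρ, false, .ex x A =>
      .strong x (A.substAll (Function.update ρ x (.var x))) (Sg x)
        (ETof W Sg (Function.update ρ x (.var (Sg x))) false A)
  | ρ, true, .ex x A =>
      .weak x (A.substAll (Function.update ρ x (.var x)))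
        ((W x).foldr (fun t acc =>
          ETs.cons t (ETof W Sg (Function.update ρ x t) true A) acc) .nil)

/-- The expansion sequent obtained from a sequent and substitution data
(Definition 9). -/
def ETseq (W : ℕ → List Tm) (Sg : ℕ → ℕ) (Γ Δ : List Fml) : List ET × List ET :=
  (Γ.map (ETof W Sg Tm.var false), Δ.map (ETof W Sg Tm.var true))


/-- Disjunction of a list of formulas. -/
def bigOr : List Fml → Fml
  | [] => fBot
  | [F] => F
  | F :: G :: rest => .or F (bigOr (G :: rest))

/-- `∃x₁…∃xₖ. A`. -/
def exList (xs : List ℕ) (A : Fml) : Fml := xs.foldr Fml.ex A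

/-! The instances `A[σ]` give the easy direction.  Conversely, if no finite disjunction of
instances is a tautology, every finite set of instances has a common countermodel.  Gluing
these countermodels along an ultrafilter on the finite sets of instances, on the term
structure (a Herbrand model), gives a model in which every atom means "eventually true in
the countermodels"; by Łoś's theorem for quantifier-free formulas no instance holds there.
But a witness for `∃x̄. A` in the term structure at the identity valuation is a term tuple,
i.e. one of the instances. -/

def termStr (P : ℕ → List Tm → Prop) : Str := ⟨Tm, .cst 0, .cst, .fn, P⟩

lemma Tm.eval_termStr (P : ℕ → List Tm → Prop) (w : ℕ → Tm) :
    Tm.eval (termStr P) w = Tm.substAll w := by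
  funext t
  induction t with
  | var => rfl
  | cst => rfl
  | fn f u ih => exact congrArg (Tm.fn f) ih

lemma Tm.eval_substAll (S : Str) (v : ℕ → S.Dom) (σ : ℕ → Tm) (t : Tm) :
    (t.substAll σ).eval S v = t.eval S (fun y => (σ y).eval S v) := by
  induction t <;> simp [Tm.eval, Tm.substAll, *]

lemma Fml.sat_substAll {F : Fml} (hF : F.qf) (S : Str) (v : ℕ → S.Dom) (σ : ℕ → Tm) :
    (F.substAll σ).Sat S v ↔ F.Sat S (fun y => (σ y).eval S v) := by
  induction F with
  | atom n ts => simp [Fml.substAll, Fml.Sat, Function.comp_def, Tm.eval_substAll]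
  | neg A ih => exact not_congr (ih hF)
  | and A B ihA ihB => exact and_congr (ihA hF.1) (ihB hF.2)
  | or A B ihA ihB => exact or_congr (ihA hF.1) (ihB hF.2)
  | imp A B ihA ihB => exact imp_congr (ihA hF.1) (ihB hF.2)
  | all => exact hF.elim
  | ex => exact hF.elim

lemma sat_bigOr (S : Str) (v : ℕ → S.Dom) :
    ∀ L : List Fml, (bigOr L).Sat S v ↔ ∃ F ∈ L, F.Sat S v
  | [] => by simp [bigOr, fBot, fTop, Fml.Sat]
  | [F] => by simp [bigOr]
  | F :: G :: rest => by
    simp only [bigOr, Fml.Sat, sat_bigOr S v (G :: rest), List.exists_mem_cons_iff]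

lemma sat_exList (A : Fml) (S : Str) :
    ∀ (xs : List ℕ) (v : ℕ → S.Dom),
      (exList xs A).Sat S v ↔ ∃ w : ℕ → S.Dom, (∀ y ∉ xs, w y = v y) ∧ A.Sat S w
  | [], v => by
    refine ⟨fun h => ⟨v, fun _ _ => rfl, h⟩, ?_⟩
    rintro ⟨w, hw, hA⟩
    rwa [funext fun y => hw y List.not_mem_nil] at hA
  | x :: xs, v => by
    simp only [exList, List.foldr_cons, Fml.Sat]
    constructor
    · rintro ⟨d, hd⟩
      obtain ⟨w, hw, hA⟩ := (sat_exList A S xs _).1 hd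
      refine ⟨w, fun y hy => ?_, hA⟩
      simp only [List.mem_cons, not_or] at hy
      rw [hw y hy.2, Function.update_of_ne hy.1]
    · rintro ⟨w, hw, hA⟩
      refine ⟨w x, (sat_exList A S xs _).2 ⟨w, fun y hy => ?_, hA⟩⟩
      by_cases hyx : y = x
      · subst hyx; simp
      · rw [Function.update_of_ne hyx]
        exact hw y (by simp [hy, hyx])

/-- Łoś's theorem for the term structure glued from the structures `S i` along `F`. -/
lemma Fml.sat_termStr_iff_eventually {ι : Type*} (F : Ultrafilter ι) (S : ι → Str)
    (v : ∀ i, ℕ → (S i).Dom) {G : Fml} (hG : G.qf) (w : ℕ → Tm) :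
    G.Sat (termStr fun p ts => ∀ᶠ i in F, (S i).pI p (ts.map (Tm.eval (S i) (v i)))) w ↔
      ∀ᶠ i in F, (G.substAll w).Sat (S i) (v i) := by
  induction G with
  | atom n ts => simp only [Fml.Sat, Fml.substAll, Tm.eval_termStr]; rfl
  | neg A ih => simp only [Fml.Sat, Fml.substAll, ih hG, Ultrafilter.eventually_not]
  | and A B ihA ihB =>
    simp only [Fml.Sat, Fml.substAll, ihA hG.1, ihB hG.2, Filter.eventually_and]
  | or A B ihA ihB =>
    simp only [Fml.Sat, Fml.substAll, ihA hG.1, ihB hG.2, Ultrafilter.eventually_or]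
  | imp A B ihA ihB =>
    simp only [Fml.Sat, Fml.substAll, ihA hG.1, ihB hG.2, Ultrafilter.eventually_imp]
  | all => exact hG.elim
  | ex => exact hG.elim

lemma exists_termStr_forall_not_sat {ι : Type*} {A : Fml} (hA : A.qf) (σ : ι → ℕ → Tm)
    (h : ∀ s : Finset ι, ∃ (S : Str) (v : ℕ → S.Dom), ∀ i ∈ s, ¬ (A.substAll (σ i)).Sat S v) :
    ∃ P : ℕ → List Tm → Prop, ∀ i, ¬ A.Sat (termStr P) (σ i) := by
  classical
  choose S v hS using h
  let F : Ultrafilter (Finset ι) := .of Filter.atTop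
  refine ⟨fun p ts => ∀ᶠ s in F, (S s).pI p (ts.map (Tm.eval (S s) (v s))), fun i hi => ?_⟩
  have hsat := (Fml.sat_termStr_iff_eventually F S v hA (σ i)).1 hi
  have hmem : ∀ᶠ s in (F : Filter (Finset ι)), i ∈ s := Ultrafilter.of_le _ <|
    (Filter.eventually_ge_atTop {i}).mono fun _ => Finset.singleton_subset_iff.1
  obtain ⟨s, hs, his⟩ := (hsat.and hmem).exists
  exact hS s i his hs

lemma exists_valid_bigOr_of_valid_exList {xs : List ℕ} {A : Fml} (hA : A.qf)
    (hv : (exList xs A).Valid) :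
    ∃ σs : List (ℕ → Tm), σs ≠ [] ∧ (∀ σ ∈ σs, ∀ y, y ∉ xs → σ y = .var y) ∧
      (bigOr (σs.map (fun σ => A.substAll σ))).Valid := by
  by_contra! hno
  let σ : {σ : ℕ → Tm // ∀ y ∉ xs, σ y = .var y} → ℕ → Tm := Subtype.val
  obtain ⟨P, hP⟩ := exists_termStr_forall_not_sat hA σ fun s => by
    have hnv := hno (Tm.var :: s.toList.map σ) (List.cons_ne_nil _ _) (by
      simp only [List.mem_cons, List.mem_map, Finset.mem_toList]
      rintro _ (rfl | ⟨τ, -, rfl⟩) y hy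
      exacts [rfl, τ.2 y hy])
    simp only [Fml.Valid, sat_bigOr, not_forall, not_exists, not_and] at hnv
    obtain ⟨S, v, hSv⟩ := hnv
    exact ⟨S, v, fun i hi => hSv _ <| List.mem_map_of_mem <| List.mem_cons_of_mem _ <|
      List.mem_map_of_mem <| Finset.mem_toList.2 hi⟩
  obtain ⟨w, hw, hAw⟩ := (sat_exList A (termStr P) xs Tm.var).1 (hv _ _)
  exact hP ⟨w, hw⟩ hAw

lemma valid_exList_of_valid_bigOr {xs : List ℕ} {A : Fml} (hA : A.qf) {σs : List (ℕ → Tm)}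
    (hσs : ∀ σ ∈ σs, ∀ y, y ∉ xs → σ y = .var y)
    (hv : (bigOr (σs.map (fun σ => A.substAll σ))).Valid) :
    (exList xs A).Valid := by
  intro S v
  obtain ⟨_, hmem, hsat⟩ := (sat_bigOr S v _).1 (hv S v)
  obtain ⟨σ, hσ, rfl⟩ := List.mem_map.1 hmem
  refine (sat_exList A S xs v).2 ⟨_, fun y hy => ?_, (Fml.sat_substAll hA S v σ).1 hsat⟩
  rw [hσs σ hσ y hy, Tm.eval]

/-- Herbrand's theorem: a purely existential prenex formula
`∃x₁…∃xₖ. A` with `A` quantifier-free is valid iff finitely many substitution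
tuples for `x₁,…,xₖ` exist whose corresponding disjunction of instances of `A`
is a (propositional) tautology. -/
theorem herbrand (xs : List ℕ) (A : Fml) (hqf : A.qf) :
    (exList xs A).Valid ↔
      ∃ σs : List (ℕ → Tm), σs ≠ [] ∧
        (∀ σ ∈ σs, ∀ y, y ∉ xs → σ y = .var y) ∧
        (bigOr (σs.map (fun σ => A.substAll σ))).Valid :=
  ⟨exists_valid_bigOr_of_valid_exList hqf,
    fun ⟨_, _, hσs, hv⟩ => valid_exList_of_valid_bigOr hqf hσs hv⟩
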